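/- Let g be a finite-dimensional real Lie algebra admitting a cyclic inner product. If g is nonabelian, then g is not the Lie algebra of a compact Lie group; equivalently, g is not a compact Lie algebra (a direct sum of its center and a semisimple ideal with negative definite Killing form). -/

import Mathlib

/-!
Let `s = [g, g]` carry the invariant inner product `-κ` given by its Killing form, and let `(e i)`
be an orthonormal basis of `s`. By invariance the structure constants
`c i j k = -κ([e i, e j], e k)` are invariant under cyclic permutations of `(i, j, k)`, so pairing
them with the cyclic identity of `B` gives
`0 = 3 ∑ c i j k B([e i, e j], e k) = 3 ∑ B([e i, e j], [e i, e j])`.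
Positivity of `B` forces `s` to be abelian; a semisimple abelian Lie algebra is trivial, so
`[g, g] = 0`.
-/

open LieAlgebra

lemma Fintype.sum_sum_sum_rotate {ι M : Type*} [Fintype ι] [AddCommMonoid M]
    (g : ι → ι → ι → M) : ∑ i, ∑ j, ∑ k, g j k i = ∑ i, ∑ j, ∑ k, g i j k := by
  rw [Finset.sum_comm]
  exact Finset.sum_congr rfl fun j _ => Finset.sum_comm

lemma Module.Basis.sum_bilin_smul_of_orthonormal {ι R M : Type*} [Fintype ι] [DecidableEq ι]
    [CommSemiring R] [AddCommMonoid M] [Module R M] {K : LinearMap.BilinForm R M}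
    {b : Module.Basis ι R M} (hb : ∀ i j, K (b i) (b j) = if i = j then 1 else 0) (w : M) :
    ∑ k, K w (b k) • b k = w := by
  have hrepr : ∀ k, K w (b k) = b.repr w k := fun k => by
    conv_lhs => rw [← b.sum_repr w]
    simp [-Module.Basis.sum_repr, map_sum, hb]
  simp_rw [hrepr, b.sum_repr]

lemma LinearMap.BilinForm.exists_basis_orthonormal {V : Type*} [AddCommGroup V] [Module ℝ V]
    [FiniteDimensional ℝ V] {K : LinearMap.BilinForm ℝ V} (hK : K.IsSymm)
    (hpos : ∀ x, x ≠ 0 → 0 < K x x) :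
    ∃ b : Module.Basis (Fin (Module.finrank ℝ V)) ℝ V,
      ∀ i j, K (b i) (b j) = if i = j then 1 else 0 := by
  let core : InnerProductSpace.Core ℝ V :=
    { inner := fun x y => K x y
      conj_inner_symm := fun x y => hK.eq y x
      re_inner_nonneg := fun x => by
        rcases eq_or_ne x 0 with rfl | hx
        · simp
        · exact (hpos x hx).le
      definite := fun x hx => by_contra fun h => (hpos x h).ne' hx
      add_left := fun x y z => by simp
      smul_left := fun x y r => by simp }
  let _ : NormedAddCommGroup V := core.toNormedAddCommGroup
  let _ : InnerProductSpace ℝ V := InnerProductSpace.ofCore core.toCore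
  let b := stdOrthonormalBasis ℝ V
  exact ⟨b.toBasis, fun i j => by
    rw [OrthonormalBasis.coe_toBasis]; exact orthonormal_iff_ite.mp b.orthonormal i j⟩

lemma LieAlgebra.isLieAbelian_of_subsingleton_derivedSeries_one {R L : Type*} [CommRing R]
    [LieRing L] [LieAlgebra R L] [Subsingleton (derivedSeries R L 1)] : IsLieAbelian L := by
  have h : derivedSeries R L 1 = ⊥ := (LieSubmodule.eq_bot_iff _).2 fun x hx =>
    congrArg Subtype.val (Subsingleton.elim (⟨x, hx⟩ : derivedSeries R L 1) 0)
  rwa [derivedSeries_def, ← abelian_iff_derived_one_eq_bot,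
    lie_abelian_iff_equiv_lie_abelian LieIdeal.topEquiv] at h

namespace LinearMap.BilinForm

def IsCyclic {R L : Type*} [CommRing R] [LieRing L] [Module R L]
    (B : LinearMap.BilinForm R L) : Prop :=
  ∀ x y z : L, B ⁅x, y⁆ z + B ⁅y, z⁆ x + B ⁅z, x⁆ y = 0

namespace IsCyclic

variable {R L ι : Type*} [Field R] [LieRing L] [LieAlgebra R L] [Fintype ι] [DecidableEq ι]
  {K B : LinearMap.BilinForm R L} {b : Module.Basis ι R L}

theorem sum_apply_lie_lie_eq_zero [CharZero R] (hB : B.IsCyclic) (hK : K.lieInvariant L)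
    (hKs : K.IsSymm) (hb : ∀ i j, K (b i) (b j) = if i = j then 1 else 0) :
    ∑ i, ∑ j, B ⁅b i, b j⁆ ⁅b i, b j⁆ = 0 := by
  set c : ι → ι → ι → R := fun i j k => K ⁅b i, b j⁆ (b k)
  have hc : ∀ i j k, c i j k = c k i j := fun i j k => by
    simp only [c]
    rw [hK, ← lie_skew (b i) (b k), map_neg, neg_neg]
    exact hKs.eq _ _
  set g : ι → ι → ι → R := fun i j k => c i j k * B ⁅b i, b j⁆ (b k)
  have hg : ∀ i j k, g i j k + g j k i + g k i j = 0 := fun i j k => by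
    simp only [g]
    rw [hc j k i, ← hc i j k, ← mul_add, ← mul_add, hB, mul_zero]
  have hsum : ∀ i j, ∑ k, g i j k = B ⁅b i, b j⁆ ⁅b i, b j⁆ := fun i j => by
    simpa [g, c, mul_comm] using
      congrArg (B ⁅b i, b j⁆) (b.sum_bilin_smul_of_orthonormal hb ⁅b i, b j⁆)
  have h3 : 3 * ∑ i, ∑ j, ∑ k, g i j k = 0 := by
    calc 3 * ∑ i, ∑ j, ∑ k, g i j k
        = ∑ i, ∑ j, ∑ k, g i j k + ∑ i, ∑ j, ∑ k, g j k i + ∑ i, ∑ j, ∑ k, g k i j := by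
          rw [Fintype.sum_sum_sum_rotate, Fintype.sum_sum_sum_rotate (fun i j k => g j k i),
            Fintype.sum_sum_sum_rotate]
          ring
      _ = 0 := by simp only [← Finset.sum_add_distrib, hg, Finset.sum_const_zero]
  simpa [hsum] using h3

theorem isLieAbelian [LinearOrder R] [IsStrictOrderedRing R] (hB : B.IsCyclic)
    (hBpos : ∀ x, x ≠ 0 → 0 < B x x) (hK : K.lieInvariant L) (hKs : K.IsSymm)
    (hb : ∀ i j, K (b i) (b j) = if i = j then 1 else 0) :
    IsLieAbelian L := by
  have hnonneg : ∀ x, 0 ≤ B x x := fun x => by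
    rcases eq_or_ne x 0 with rfl | hx
    · simp
    · exact (hBpos x hx).le
  have hzero : ∀ i j, ⁅b i, b j⁆ = 0 := fun i j => by
    have h := hB.sum_apply_lie_lie_eq_zero hK hKs hb
    rw [Finset.sum_eq_zero_iff_of_nonneg fun i _ => Finset.sum_nonneg fun j _ => hnonneg _] at h
    have h := (Finset.sum_eq_zero_iff_of_nonneg fun j _ => hnonneg _).mp (h i (by simp)) j
      (by simp)
    by_contra hne
    exact (hBpos _ hne).ne' h
  refine ⟨fun x y => ?_⟩
  rw [← b.sum_repr x, ← b.sum_repr y]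
  simp only [sum_lie, lie_sum, smul_lie, lie_smul, hzero, smul_zero, Finset.sum_const_zero]

end IsCyclic

end LinearMap.BilinForm

theorem cyclic_nonabelian_not_compact_general {L : Type*} [LieRing L] [LieAlgebra ℝ L]
    [FiniteDimensional ℝ L]
    (B : L →ₗ[ℝ] L →ₗ[ℝ] ℝ)
    (hpos : ∀ x : L, x ≠ 0 → 0 < B x x)
    (hcyc : ∀ X Y Z : L, B ⁅X, Y⁆ Z + B ⁅Y, Z⁆ X + B ⁅Z, X⁆ Y = 0)
    (hnab : ¬ IsLieAbelian L) :
    ¬ (IsCompl (LieSubmodule.toSubmodule (LieAlgebra.center ℝ L))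
          (LieSubmodule.toSubmodule (LieAlgebra.derivedSeries ℝ L 1)) ∧
        LieAlgebra.IsSemisimple ℝ (LieAlgebra.derivedSeries ℝ L 1) ∧
        (∀ x : LieAlgebra.derivedSeries ℝ L 1, x ≠ 0 →
          killingForm ℝ (LieAlgebra.derivedSeries ℝ L 1) x x < 0)) := by
  rintro ⟨-, hss, hneg⟩
  set s := derivedSeries ℝ L 1
  let K : LinearMap.BilinForm ℝ s := -killingForm ℝ s
  have hKs : K.IsSymm := ⟨fun x y => congrArg Neg.neg (LieModule.traceForm_comm ℝ s s x y)⟩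
  have hK : K.lieInvariant s := fun x y z =>
    congrArg Neg.neg (LieModule.traceForm_lieInvariant ℝ s s x y z)
  obtain ⟨b, hb⟩ := K.exists_basis_orthonormal hKs fun x hx => neg_pos.mpr (hneg x hx)
  let Bs : LinearMap.BilinForm ℝ s := B.compl₁₂ s.incl.toLinearMap s.incl.toLinearMap
  have hBs : Bs.IsCyclic := fun x y z => hcyc x y z
  have : IsLieAbelian s := hBs.isLieAbelian (fun x hx => hpos x (by simpa using hx)) hK hKs hb
  have : Subsingleton s := subsingleton_of_hasTrivialRadical_lie_abelian ℝ s
  exact hnab (isLieAbelian_of_subsingleton_derivedSeries_one (R := ℝ))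

/-- A nonabelian finite-dimensional real Lie algebra admitting a cyclic inner
product is not a compact Lie algebra, i.e. it does not decompose as the direct sum of its
center and its derived algebra with the latter semisimple with negative definite Killing
form. -/
theorem cyclic_nonabelian_not_compact {L : Type*} [LieRing L] [LieAlgebra ℝ L]
    [FiniteDimensional ℝ L]
    (B : L →ₗ[ℝ] L →ₗ[ℝ] ℝ)
    (hsymm : ∀ x y : L, B x y = B y x)
    (hpos : ∀ x : L, x ≠ 0 → 0 < B x x)
    (hcyc : ∀ X Y Z : L, B ⁅X, Y⁆ Z + B ⁅Y, Z⁆ X + B ⁅Z, X⁆ Y = 0)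
    (hnab : ¬ IsLieAbelian L) :
    ¬ (IsCompl (LieSubmodule.toSubmodule (LieAlgebra.center ℝ L))
          (LieSubmodule.toSubmodule (LieAlgebra.derivedSeries ℝ L 1)) ∧
        LieAlgebra.IsSemisimple ℝ (LieAlgebra.derivedSeries ℝ L 1) ∧
        (∀ x : LieAlgebra.derivedSeries ℝ L 1, x ≠ 0 →
          killingForm ℝ (LieAlgebra.derivedSeries ℝ L 1) x x < 0)) :=
  cyclic_nonabelian_not_compact_general B hpos hcyc hnab
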